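/- arXiv:2303.14532 — 3 statements merged into one kernel-verified Lean document; each statement's English description precedes it below -/
import Mathlib

section
/- Let p_1 = 3, p_2 = 5, p_3 = 7, p_4 = 11, … be the increasing enumeration of the odd prime numbers. For all natural numbers m ≥ 1 and k ≥ 1, and every real number a ≥ p_m, the strict inequality (2·(2k)!/(π^{2k}(2^{2k} − 1))) · (Π_{n=1}^{m−1} p_n^{2k}/(p_n^{2k} − 1)) · a^{2k}/(a^{2k} − 1) < |B_{2k}| holds. -/
open Finset

/-- The `n`-th odd prime (0-indexed): `oddPrime 0 = 3`, `oddPrime 1 = 5`, etc. -/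
noncomputable def oddPrime (n : ℕ) : ℕ := Nat.nth (fun p => p.Prime ∧ p ≠ 2) n

lemma oddPrime_infinite : {p : ℕ | p.Prime ∧ p ≠ 2}.Infinite := by
  have h : {p : ℕ | p.Prime ∧ p ≠ 2} = {p : ℕ | p.Prime} \ {2} := by
    ext p; simp [Set.mem_diff]
  rw [h]
  exact Set.Infinite.diff Nat.infinite_setOf_prime (Set.finite_singleton 2)

lemma oddPrime_spec (n : ℕ) : (oddPrime n).Prime ∧ oddPrime n ≠ 2 :=
  Nat.nth_mem_of_infinite oddPrime_infinite n

lemma three_le_oddPrime (n : ℕ) : 3 ≤ oddPrime n := by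
  have h := oddPrime_spec n
  have := h.1.two_le
  omega

lemma oddPrime_injective : Function.Injective oddPrime :=
  Nat.nth_injective oddPrime_infinite

/-- The completely multiplicative function n ↦ 1/n^t. -/
noncomputable def fpow (t : ℕ) : ℕ →* ℝ where
  toFun n := 1 / (n : ℝ) ^ t
  map_one' := by norm_num
  map_mul' m n := by push_cast; rw [mul_pow]; ring

lemma summable_fpow {t : ℕ} (ht : 2 ≤ t) : Summable (⇑(fpow t)) := by
  have h : ⇑(fpow t) = fun n : ℕ => 1 / (n : ℝ) ^ t := rfl
  rw [h]
  exact Real.summable_one_div_nat_pow.mpr (by omega)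

lemma prod_lt_zeta {t : ℕ} (ht : 2 ≤ t) (S : Finset ℕ) (hS : ∀ p ∈ S, p.Prime) :
    ∏ p ∈ S, ((p : ℝ) ^ t / ((p : ℝ) ^ t - 1)) < ∑' n : ℕ, 1 / (n : ℝ) ^ t := by
  have hsum := summable_fpow ht
  have hfac : ∀ p ∈ S, (p : ℝ) ^ t / ((p : ℝ) ^ t - 1) = (1 - fpow t p)⁻¹ := by
    intro p hp
    have h2 : (2 : ℝ) ≤ (p : ℝ) := by exact_mod_cast (hS p hp).two_le
    have hne : (p : ℝ) ^ t ≠ 0 := by positivity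
    show _ = (1 - 1 / (p : ℝ) ^ t)⁻¹
    rw [one_sub_div hne, inv_div]
  rw [Finset.prod_congr rfl hfac]
  have hfilter : S.filter Nat.Prime = S := Finset.filter_true_of_mem hS
  have hprod := EulerProduct.prod_filter_prime_geometric_eq_tsum_factoredNumbers hsum S
  rw [hfilter] at hprod
  rw [hprod]
  obtain ⟨q, hqle, hq⟩ := Nat.exists_infinite_primes (S.sup id + 1)
  have hqS : q ∉ S := fun h => by
    have := Finset.le_sup (f := id) h
    simp only [id] at this; omega
  have hqf : q ∉ Nat.factoredNumbers S := by
    rw [Nat.mem_factoredNumbers]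
    intro ⟨_, h⟩
    exact hqS (h q (by rw [Nat.primeFactorsList_prime hq]; exact List.mem_singleton_self q))
  have hnonneg : ∀ n : ℕ, 0 ≤ fpow t n := fun n => by
    show (0:ℝ) ≤ 1 / (n : ℝ) ^ t; positivity
  rw [_root_.tsum_subtype]
  refine Summable.tsum_lt_tsum (f := (Nat.factoredNumbers S).indicator (⇑(fpow t))) (i := q)
    (fun n => Set.indicator_le_self' (fun n _ => hnonneg n) n) ?_ (hsum.indicator _) hsum
  rw [Set.indicator_of_notMem hqf]
  show (0:ℝ) < 1 / (q:ℝ)^t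
  have hq0 : (0:ℝ) < (q:ℝ) := by exact_mod_cast hq.pos
  positivity

lemma ratio_antitone {t : ℕ} (ht : 1 ≤ t) {b a : ℝ} (hb : 1 < b) (hba : b ≤ a) :
    a ^ t / (a ^ t - 1) ≤ b ^ t / (b ^ t - 1) := by
  have hbt : (1:ℝ) < b ^ t := one_lt_pow₀ hb (by omega)
  have hat : b ^ t ≤ a ^ t := pow_le_pow_left₀ (by linarith) hba t
  rw [div_le_div_iff₀ (by linarith) (by linarith)]
  nlinarith

theorem bernoulli_lower_bound_product_of_ge_prime (m k : ℕ) (hm : 1 ≤ m) (hk : 1 ≤ k)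
    (a : ℝ) (ha : (oddPrime (m - 1) : ℝ) ≤ a) :
    (2 * (Nat.factorial (2 * k) : ℝ) / (Real.pi ^ (2 * k) * ((2 : ℝ) ^ (2 * k) - 1))) *
      (∏ n ∈ Finset.range (m - 1),
        ((oddPrime n : ℝ) ^ (2 * k) / ((oddPrime n : ℝ) ^ (2 * k) - 1))) *
      (a ^ (2 * k) / (a ^ (2 * k) - 1))
    < |(bernoulli (2 * k) : ℝ)| := by
  have hk2 : 2 ≤ 2 * k := by omega
  set Z : ℝ := ∑' n : ℕ, 1 / (n : ℝ) ^ (2 * k) with hZdef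
  have hZsum : HasSum (fun n : ℕ => 1 / (n : ℝ) ^ (2 * k))
      ((-1 : ℝ) ^ (k + 1) * (2 : ℝ) ^ (2 * k - 1) * Real.pi ^ (2 * k) *
        bernoulli (2 * k) / (Nat.factorial (2 * k))) := hasSum_zeta_nat (by omega)
  have hZeq : Z = (-1 : ℝ) ^ (k + 1) * (2 : ℝ) ^ (2 * k - 1) * Real.pi ^ (2 * k) *
      bernoulli (2 * k) / (Nat.factorial (2 * k)) := hZsum.tsum_eq
  have hZ1 : (1:ℝ) ≤ Z := by
    calc (1:ℝ) = 1 / ((1:ℕ):ℝ)^(2*k) := by norm_num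
    _ ≤ Z := Summable.le_tsum hZsum.summable 1 (fun n _ => by positivity)
  have hpi : (0:ℝ) < Real.pi ^ (2*k) := by positivity
  have hfacpos : (0:ℝ) < (Nat.factorial (2*k) : ℝ) := by exact_mod_cast Nat.factorial_pos _
  have h2 : (2:ℝ) * 2 ^ (2*k - 1) = 2 ^ (2*k) := by
    rw [← pow_succ']; congr 1; omega
  have hZ' : Z * (Nat.factorial (2*k) : ℝ) =
      (-1:ℝ)^(k+1) * 2^(2*k-1) * Real.pi^(2*k) * bernoulli (2*k) := by
    rw [hZeq, div_mul_cancel₀]; exact hfacpos.ne'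
  have hBval : ((-1:ℝ))^(k+1) * bernoulli (2*k) =
      Z * (Nat.factorial (2*k) : ℝ) * 2 / (2^(2*k) * Real.pi^(2*k)) := by
    rw [eq_div_iff (by positivity)]
    linear_combination (-(((-1:ℝ))^(k+1) * ((bernoulli (2*k) : ℝ)) * Real.pi^(2*k))) * h2
      - 2 * hZ'
  have hBpos : (0:ℝ) < ((-1:ℝ))^(k+1) * bernoulli (2*k) := by
    rw [hBval]
    have hZ0 : (0:ℝ) < Z := by linarith
    positivity
  have habs : |(bernoulli (2*k) : ℝ)| =
      Z * (Nat.factorial (2*k) : ℝ) * 2 / (2^(2*k) * Real.pi^(2*k)) := by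
    rw [← hBval, ← abs_of_pos hBpos, abs_mul, abs_pow, abs_neg, abs_one, one_pow, one_mul]
  rw [habs]
  set S : Finset ℕ := insert 2 ((Finset.range m).image oddPrime) with hSdef
  have hS : ∀ p ∈ S, p.Prime := by
    intro p hp
    rw [hSdef, Finset.mem_insert] at hp
    rcases hp with h | h
    · rw [h]; exact Nat.prime_two
    · obtain ⟨n, _, rfl⟩ := Finset.mem_image.mp h
      exact (oddPrime_spec n).1
  have h2S : 2 ∉ (Finset.range m).image oddPrime := by
    intro h
    obtain ⟨n, _, hn⟩ := Finset.mem_image.mp h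
    exact (oddPrime_spec n).2 hn
  have key : ∏ p ∈ S, ((p : ℝ) ^ (2*k) / ((p : ℝ) ^ (2*k) - 1)) < Z := prod_lt_zeta hk2 S hS
  have hprodS : ∏ p ∈ S, ((p : ℝ) ^ (2*k) / ((p : ℝ) ^ (2*k) - 1)) =
      ((2:ℝ)^(2*k) / ((2:ℝ)^(2*k) - 1)) * ∏ n ∈ Finset.range m,
        ((oddPrime n : ℝ) ^ (2*k) / ((oddPrime n : ℝ) ^ (2*k) - 1)) := by
    rw [hSdef, Finset.prod_insert h2S, Finset.prod_image
      (fun i _ j _ h => oddPrime_injective h)]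
    norm_num
  have hq3 : (3:ℝ) ≤ (oddPrime (m-1) : ℝ) := by exact_mod_cast three_le_oddPrime (m-1)
  have haf : a ^ (2*k) / (a ^ (2*k) - 1) ≤
      (oddPrime (m-1) : ℝ) ^ (2*k) / ((oddPrime (m-1) : ℝ) ^ (2*k) - 1) :=
    ratio_antitone (by omega) (by linarith) ha
  have hrange : Finset.range m = Finset.range (m - 1 + 1) := by congr 1; omega
  have hsplit : ∏ n ∈ Finset.range m,
      ((oddPrime n : ℝ) ^ (2*k) / ((oddPrime n : ℝ) ^ (2*k) - 1)) =
      (∏ n ∈ Finset.range (m-1), ((oddPrime n : ℝ) ^ (2*k) / ((oddPrime n : ℝ) ^ (2*k) - 1))) *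
        ((oddPrime (m-1) : ℝ) ^ (2*k) / ((oddPrime (m-1) : ℝ) ^ (2*k) - 1)) := by
    rw [hrange, Finset.prod_range_succ]
  have hfactor_pos : ∀ n : ℕ, (0:ℝ) < (oddPrime n : ℝ) ^ (2*k) / ((oddPrime n : ℝ) ^ (2*k) - 1) := by
    intro n
    have h3 : (3:ℝ) ≤ (oddPrime n : ℝ) := by exact_mod_cast three_le_oddPrime n
    have h1 : (1:ℝ) < (oddPrime n : ℝ) ^ (2*k) := one_lt_pow₀ (by linarith) (by omega)
    exact div_pos (by linarith) (by linarith)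
  have hP_pos : (0:ℝ) < ∏ n ∈ Finset.range (m-1),
      ((oddPrime n : ℝ) ^ (2*k) / ((oddPrime n : ℝ) ^ (2*k) - 1)) :=
    Finset.prod_pos (fun n _ => hfactor_pos n)
  have h2t : (1:ℝ) < (2:ℝ)^(2*k) := one_lt_pow₀ one_lt_two (by omega)
  have h2f_pos : (0:ℝ) < (2:ℝ)^(2*k) / ((2:ℝ)^(2*k) - 1) :=
    div_pos (by linarith) (by linarith)
  have hchain : ((2:ℝ)^(2*k) / ((2:ℝ)^(2*k) - 1)) *
      (∏ n ∈ Finset.range (m-1), ((oddPrime n : ℝ) ^ (2*k) / ((oddPrime n : ℝ) ^ (2*k) - 1))) *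
      (a ^ (2*k) / (a ^ (2*k) - 1)) < Z := by
    calc ((2:ℝ)^(2*k) / ((2:ℝ)^(2*k) - 1)) *
        (∏ n ∈ Finset.range (m-1), ((oddPrime n : ℝ) ^ (2*k) / ((oddPrime n : ℝ) ^ (2*k) - 1))) *
        (a ^ (2*k) / (a ^ (2*k) - 1))
        ≤ ((2:ℝ)^(2*k) / ((2:ℝ)^(2*k) - 1)) *
        (∏ n ∈ Finset.range (m-1), ((oddPrime n : ℝ) ^ (2*k) / ((oddPrime n : ℝ) ^ (2*k) - 1))) *
        ((oddPrime (m-1) : ℝ) ^ (2*k) / ((oddPrime (m-1) : ℝ) ^ (2*k) - 1)) := by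
          exact mul_le_mul_of_nonneg_left haf (le_of_lt (mul_pos h2f_pos hP_pos))
      _ = ∏ p ∈ S, ((p : ℝ) ^ (2*k) / ((p : ℝ) ^ (2*k) - 1)) := by
          rw [hprodS, hsplit]; ring
      _ < Z := key
  have hc_pos : (0:ℝ) < (Nat.factorial (2*k) : ℝ) * 2 / ((2:ℝ)^(2*k) * Real.pi^(2*k)) := by
    positivity
  have hfinal := mul_lt_mul_of_pos_left hchain hc_pos
  have heq : ((Nat.factorial (2*k) : ℝ) * 2 / ((2:ℝ)^(2*k) * Real.pi^(2*k))) *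
      (((2:ℝ)^(2*k) / ((2:ℝ)^(2*k) - 1)) *
      (∏ n ∈ Finset.range (m-1), ((oddPrime n : ℝ) ^ (2*k) / ((oddPrime n : ℝ) ^ (2*k) - 1))) *
      (a ^ (2*k) / (a ^ (2*k) - 1))) =
      (2 * (Nat.factorial (2*k) : ℝ) / (Real.pi ^ (2*k) * ((2:ℝ)^(2*k) - 1))) *
      (∏ n ∈ Finset.range (m-1), ((oddPrime n : ℝ) ^ (2*k) / ((oddPrime n : ℝ) ^ (2*k) - 1))) *
      (a ^ (2*k) / (a ^ (2*k) - 1)) := by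
    have hA : ((2:ℝ)^(2*k)) ≠ 0 := by positivity
    have hA1 : ((2:ℝ)^(2*k) - 1) ≠ 0 := by linarith
    have hB : Real.pi ^ (2*k) ≠ 0 := hpi.ne'
    generalize (∏ n ∈ Finset.range (m-1),
      ((oddPrime n : ℝ) ^ (2*k) / ((oddPrime n : ℝ) ^ (2*k) - 1))) = P
    generalize (a ^ (2*k) / (a ^ (2*k) - 1)) = Q
    field_simp
  rw [heq] at hfinal
  calc (2 * (Nat.factorial (2*k) : ℝ) / (Real.pi ^ (2*k) * ((2:ℝ)^(2*k) - 1))) *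
      (∏ n ∈ Finset.range (m-1), ((oddPrime n : ℝ) ^ (2*k) / ((oddPrime n : ℝ) ^ (2*k) - 1))) *
      (a ^ (2*k) / (a ^ (2*k) - 1))
      < ((Nat.factorial (2*k) : ℝ) * 2 / ((2:ℝ)^(2*k) * Real.pi^(2*k))) * Z := hfinal
    _ = Z * (Nat.factorial (2*k) : ℝ) * 2 / (2^(2*k) * Real.pi^(2*k)) := by ring
end

section
/- The constant α = 1 is best possible in the lower bound for even-indexed Bernoulli numbers: if α is a real number such that (2·(2k)!/(π^{2k}(2^{2k} − 1))) · 3^{2k}/(3^{2k} − α) < |B_{2k}| for every natural number k ≥ 1, then α ≤ 1. -/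
/-!
Euler's formula `|B_{2k}| = 2 (2k)! ζ(2k) / (2π)^{2k}` turns the hypothesis at `k` into
`3^{2k} / (3^{2k} - α) < (1 - 2^{-2k}) ζ(2k) ≤ ζ(2k) - 2^{-2k}`. Since
`ζ(2k) = 1 + 2^{-2k} + 3^{-2k} + O(16^{-k})` and `3^{2k} / (3^{2k} - α) ≥ 1 + α 3^{-2k}`, this gives
`α < 1 + O((9/16)^k)`; now let `k → ∞`.
-/

open Real Filter Topology

open scoped Nat

noncomputable def zetaTail (N p : ℕ) : ℝ := ∑' i : ℕ, 1 / ((i + N : ℕ) : ℝ) ^ p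

lemma zetaTail_nonneg (N p : ℕ) : 0 ≤ zetaTail N p :=
  tsum_nonneg fun _ => by positivity

lemma summable_one_div_nat_add_pow {p : ℕ} (hp : 1 < p) (N : ℕ) :
    Summable fun i : ℕ => 1 / ((i + N : ℕ) : ℝ) ^ p :=
  (summable_nat_add_iff N).mpr (Real.summable_one_div_nat_pow.mpr hp)

lemma tsum_one_div_nat_pow_eq {p : ℕ} (hp : 1 < p) :
    ∑' n : ℕ, 1 / (n : ℝ) ^ p = 1 + 1 / 2 ^ p + 1 / 3 ^ p + zetaTail 4 p := by
  rw [← (Real.summable_one_div_nat_pow.mpr hp).sum_add_tsum_nat_add 4, zetaTail]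
  simp [Finset.sum_range_succ, zero_pow (by omega : p ≠ 0)]

lemma zetaTail_add_le {N q : ℕ} (hN : 0 < N) (hq : 1 < q) (r : ℕ) :
    zetaTail N (q + r) ≤ zetaTail N q / N ^ r := by
  rw [zetaTail, zetaTail, ← tsum_div_const]
  refine Summable.tsum_le_tsum (fun i => ?_) (summable_one_div_nat_add_pow (by omega) N)
    ((summable_one_div_nat_add_pow hq N).div_const _)
  have hNi : (N : ℝ) ≤ ((i + N : ℕ) : ℝ) := by exact_mod_cast Nat.le_add_left N i
  rw [pow_add, div_div]
  exact one_div_le_one_div_of_le (by positivity)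
    (mul_le_mul_of_nonneg_left (pow_le_pow_left₀ (by positivity) hNi r) (by positivity))

lemma three_pow_mul_zetaTail_le (m : ℕ) :
    (3 : ℝ) ^ (2 * (m + 1)) * zetaTail 4 (2 * (m + 1)) ≤ 9 * zetaTail 4 2 * (9 / 16) ^ m := by
  calc (3 : ℝ) ^ (2 * (m + 1)) * zetaTail 4 (2 * (m + 1))
      ≤ 3 ^ (2 * (m + 1)) * (zetaTail 4 2 / 4 ^ (2 * m)) := by
        gcongr
        simpa [mul_add, add_comm] using zetaTail_add_le (N := 4) (by norm_num) one_lt_two (2 * m)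
    _ = 9 * zetaTail 4 2 * (9 / 16) ^ m := by
        rw [pow_mul, pow_mul, div_pow]
        field_simp
        ring

lemma abs_bernoulli_two_mul {k : ℕ} (hk : k ≠ 0) :
    |(bernoulli (2 * k) : ℝ)| =
      2 * (2 * k)! / (2 * π) ^ (2 * k) * ∑' n : ℕ, 1 / (n : ℝ) ^ (2 * k) := by
  have hsum := (hasSum_zeta_nat hk).tsum_eq
  have htwo : (2 : ℝ) ^ (2 * k) = 2 * 2 ^ (2 * k - 1) := by
    rw [← pow_succ']
    congr 1
    omega
  have hζ : 0 ≤ ∑' n : ℕ, 1 / (n : ℝ) ^ (2 * k) := tsum_nonneg fun n => by positivity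
  have hsigned : (-1) ^ (k + 1) * (bernoulli (2 * k) : ℝ) =
      2 * (2 * k)! / (2 * π) ^ (2 * k) * ∑' n : ℕ, 1 / (n : ℝ) ^ (2 * k) := by
    rw [hsum, mul_pow, htwo]
    field_simp
  calc |(bernoulli (2 * k) : ℝ)| = |(-1) ^ (k + 1) * (bernoulli (2 * k) : ℝ)| := by
        rw [abs_mul, abs_neg_one_pow, one_mul]
    _ = _ := by rw [hsigned, abs_of_nonneg (mul_nonneg (by positivity) hζ)]

lemma one_add_div_le_div_sub {y α : ℝ} (hy : 0 < y) (hαy : α < y) :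
    1 + α / y ≤ y / (y - α) := by
  rw [le_div_iff₀ (sub_pos.2 hαy)]
  have : (1 + α / y) * (y - α) = y - α ^ 2 / y := by
    field_simp
    ring
  rw [this]
  linarith [div_nonneg (sq_nonneg α) hy.le]

lemma div_sub_lt_of_lt_abs_bernoulli {k : ℕ} (hk : k ≠ 0) {α : ℝ}
    (h : (2 * ((2 * k)! : ℝ) / (π ^ (2 * k) * ((2 : ℝ) ^ (2 * k) - 1))) *
        ((3 : ℝ) ^ (2 * k) / ((3 : ℝ) ^ (2 * k) - α)) < |(bernoulli (2 * k) : ℝ)|) :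
    (3 : ℝ) ^ (2 * k) / ((3 : ℝ) ^ (2 * k) - α) <
      (1 - 1 / 2 ^ (2 * k)) * ∑' n : ℕ, 1 / (n : ℝ) ^ (2 * k) := by
  have hx : (1 : ℝ) < 2 ^ (2 * k) := one_lt_pow₀ one_lt_two (by omega)
  rw [abs_bernoulli_two_mul hk] at h
  refine lt_of_mul_lt_mul_left (h.trans_eq ?_)
    (by positivity : 0 ≤ 2 * ((2 * k)! : ℝ) / (π ^ (2 * k) * ((2 : ℝ) ^ (2 * k) - 1)))
  have : (2 : ℝ) ^ (2 * k) - 1 ≠ 0 := by linarith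
  field_simp
  ring

lemma lt_one_add_mul_zetaTail {k : ℕ} (hk : k ≠ 0) {α : ℝ} (hαy : α < 3 ^ (2 * k))
    (h : (2 * ((2 * k)! : ℝ) / (π ^ (2 * k) * ((2 : ℝ) ^ (2 * k) - 1))) *
        ((3 : ℝ) ^ (2 * k) / ((3 : ℝ) ^ (2 * k) - α)) < |(bernoulli (2 * k) : ℝ)|) :
    α < 1 + 3 ^ (2 * k) * zetaTail 4 (2 * k) := by
  set x : ℝ := 2 ^ (2 * k)
  set y : ℝ := 3 ^ (2 * k)
  set ζ := ∑' n : ℕ, 1 / (n : ℝ) ^ (2 * k)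
  have hy : 0 < y := by positivity
  have hζ : ζ = 1 + 1 / x + 1 / y + zetaTail 4 (2 * k) := tsum_one_div_nat_pow_eq (by omega)
  have hζ_one : 1 ≤ ζ := by
    have : 0 ≤ 1 / x + 1 / y := by positivity
    linarith [zetaTail_nonneg 4 (2 * k)]
  have hζx : (1 - 1 / x) * ζ ≤ ζ - 1 / x := by
    have : 1 / x ≤ 1 / x * ζ := le_mul_of_one_le_right (by positivity) hζ_one
    linarith
  have hchain := (one_add_div_le_div_sub hy hαy).trans_lt
    ((div_sub_lt_of_lt_abs_bernoulli hk h).trans_le hζx)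
  have hαy' : α / y < 1 / y + zetaTail 4 (2 * k) := by linarith
  rw [div_lt_iff₀ hy, add_mul, div_mul_cancel₀ _ hy.ne'] at hαy'
  linarith

theorem bernoulli_lower_bound_alpha_best (α : ℝ)
    (h : ∀ k : ℕ, 1 ≤ k →
      (2 * (Nat.factorial (2 * k) : ℝ) / (Real.pi ^ (2 * k) * ((2 : ℝ) ^ (2 * k) - 1))) *
        ((3 : ℝ) ^ (2 * k) / ((3 : ℝ) ^ (2 * k) - α))
      < |(bernoulli (2 * k) : ℝ)|) :
    α ≤ 1 := by
  have hthree : Tendsto (fun m : ℕ => (3 : ℝ) ^ (2 * (m + 1))) atTop atTop :=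
    tendsto_atTop_mono (fun m => pow_le_pow_right₀ (by norm_num) (by omega : m ≤ 2 * (m + 1)))
      (tendsto_pow_atTop_atTop_of_one_lt (by norm_num))
  have hbound : ∀ᶠ m : ℕ in atTop, α - 1 ≤ 9 * zetaTail 4 2 * (9 / 16) ^ m := by
    filter_upwards [hthree.eventually_gt_atTop α] with m hαy
    have hα := lt_one_add_mul_zetaTail (by omega : m + 1 ≠ 0) hαy (h (m + 1) (by omega))
    linarith [three_pow_mul_zetaTail_le m]
  have hlim : Tendsto (fun m : ℕ => 9 * zetaTail 4 2 * (9 / 16 : ℝ) ^ m) atTop (𝓝 0) := by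
    simpa using (tendsto_pow_atTop_nhds_zero_of_lt_one (by norm_num) (by norm_num)).const_mul
      (9 * zetaTail 4 2)
  linarith [ge_of_tendsto hlim hbound]
end

section
/- The function h(x) = 3^x · [1 − 1/((1 − 2^{−x}) ζ(x))] tends to 1 as x → ∞. -/
/-- The real Riemann zeta function, `ζ(x) = ∑_{n=1}^∞ 1/n^x`. -/
noncomputable def zetaR (x : ℝ) : ℝ := ∑' n : ℕ, 1 / ((n : ℝ) + 1) ^ x

/-- `h(x) = 3^x · (1 − 1/((1 − 2^{−x}) ζ(x)))`. -/
noncomputable def h (x : ℝ) : ℝ := (3 : ℝ) ^ x * (1 - 1 / ((1 - (2 : ℝ) ^ (-x)) * zetaR x))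

/-! Splitting `ζ(x)` into odd and even terms gives `(1 - 2^{-x}) ζ(x) = λ(x) = ∑ₖ (2k+1)^{-x}`,
and `λ(x) = 1 + 3^{-x} T(x)` with `T(x) = ∑ₖ (3/(2k+3))^x`, so `h(x) = T(x) / (1 + 3^{-x} T(x))`.
All terms of `T` tend to `0` except the constant `k = 0` term, and for `x ≥ 2` they are dominated
by their values at `x = 2`; by dominated convergence `T(x) → 1`, hence `h(x) → 1`. -/

open Filter Topology

section

variable {G : Type*} [AddCommGroup G] [UniformSpace G] [IsUniformAddGroup G] [CompleteSpace G]
  {f : ℕ → G}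

lemma Summable.comp_two_mul (hf : Summable f) : Summable fun k => f (2 * k) :=
  hf.comp_injective (mul_right_injective₀ two_ne_zero)

lemma Summable.comp_two_mul_add_one (hf : Summable f) : Summable fun k => f (2 * k + 1) :=
  hf.comp_injective ((add_left_injective 1).comp (mul_right_injective₀ two_ne_zero))

end

noncomputable def dirichletLambdaR (x : ℝ) : ℝ := ∑' k : ℕ, 1 / (2 * (k : ℝ) + 1) ^ x

noncomputable def lambdaTail (x : ℝ) : ℝ := ∑' k : ℕ, (3 / (2 * (k : ℝ) + 3)) ^ x

lemma summable_one_div_nat_add_one_rpow {x : ℝ} (hx : 1 < x) :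
    Summable fun n : ℕ => 1 / ((n : ℝ) + 1) ^ x := by
  simpa using (summable_nat_add_iff 1).mpr (Real.summable_one_div_nat_rpow.mpr hx)

lemma summable_one_div_two_mul_add_one_rpow {x : ℝ} (hx : 1 < x) :
    Summable fun k : ℕ => 1 / (2 * (k : ℝ) + 1) ^ x := by
  simpa using (summable_one_div_nat_add_one_rpow hx).comp_two_mul

lemma one_sub_two_rpow_neg_mul_zetaR {x : ℝ} (hx : 1 < x) :
    (1 - (2 : ℝ) ^ (-x)) * zetaR x = dirichletLambdaR x := by
  have hf := summable_one_div_nat_add_one_rpow hx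
  have heven : ∀ k : ℕ, 1 / (((2 * k : ℕ) : ℝ) + 1) ^ x = 1 / (2 * (k : ℝ) + 1) ^ x := by
    simp
  have hodd : ∀ k : ℕ,
      1 / (((2 * k + 1 : ℕ) : ℝ) + 1) ^ x = 2 ^ (-x) * (1 / ((k : ℝ) + 1) ^ x) := fun k => by
    rw [show ((2 * k + 1 : ℕ) : ℝ) + 1 = 2 * ((k : ℝ) + 1) by push_cast; ring,
      Real.mul_rpow zero_le_two (by positivity), Real.rpow_neg zero_le_two]
    field_simp
  have hsplit : dirichletLambdaR x + 2 ^ (-x) * zetaR x = zetaR x := by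
    have := tsum_even_add_odd (Summable.comp_two_mul hf) (Summable.comp_two_mul_add_one hf)
    rwa [tsum_congr heven, tsum_congr hodd, tsum_mul_left] at this
  linear_combination -hsplit

lemma three_div_two_mul_add_three_rpow (x : ℝ) (k : ℕ) :
    (3 / (2 * (k : ℝ) + 3)) ^ x = 3 ^ x * (1 / (2 * ((k + 1 : ℕ) : ℝ) + 1) ^ x) := by
  rw [Real.div_rpow zero_le_three (by positivity)]
  push_cast
  ring_nf

lemma summable_lambdaTail_terms {x : ℝ} (hx : 1 < x) :
    Summable fun k : ℕ => (3 / (2 * (k : ℝ) + 3)) ^ x := by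
  simp only [three_div_two_mul_add_three_rpow x]
  exact ((summable_nat_add_iff 1).mpr (summable_one_div_two_mul_add_one_rpow hx)).mul_left _

lemma dirichletLambdaR_eq_one_add {x : ℝ} (hx : 1 < x) :
    dirichletLambdaR x = 1 + 3 ^ (-x) * lambdaTail x := by
  rw [dirichletLambdaR, (summable_one_div_two_mul_add_one_rpow hx).tsum_eq_zero_add, lambdaTail,
    ← tsum_mul_left]
  simp only [three_div_two_mul_add_three_rpow x, ← mul_assoc, ← Real.rpow_add three_pos,
    neg_add_cancel, Real.rpow_zero, one_mul]
  simp

lemma lambdaTail_nonneg (x : ℝ) : 0 ≤ lambdaTail x :=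
  tsum_nonneg fun _ => Real.rpow_nonneg (by positivity) x

lemma three_div_two_mul_add_three_le_one (k : ℕ) : 3 / (2 * (k : ℝ) + 3) ≤ 1 := by
  rw [div_le_one (by positivity)]
  linarith [(k.cast_nonneg : (0 : ℝ) ≤ k)]

lemma three_div_two_mul_add_three_lt_one {k : ℕ} (hk : k ≠ 0) : 3 / (2 * (k : ℝ) + 3) < 1 := by
  rw [div_lt_one (by positivity)]
  have : (1 : ℝ) ≤ k := by exact_mod_cast Nat.one_le_iff_ne_zero.mpr hk
  linarith

lemma tendsto_lambdaTail : Tendsto lambdaTail atTop (𝓝 1) := by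
  have hterm : ∀ k : ℕ, Tendsto (fun x : ℝ => (3 / (2 * (k : ℝ) + 3)) ^ x) atTop
      (𝓝 (if k = 0 then 1 else 0)) := by
    intro k
    by_cases hk : k = 0
    · simp [hk]
    · rw [if_neg hk]
      exact tendsto_rpow_atTop_of_base_lt_one _
        (by linarith [(by positivity : (0 : ℝ) ≤ 3 / (2 * (k : ℝ) + 3))])
        (three_div_two_mul_add_three_lt_one hk)
  have hbound : ∀ᶠ x : ℝ in atTop, ∀ k : ℕ,
      ‖(3 / (2 * (k : ℝ) + 3)) ^ x‖ ≤ (3 / (2 * (k : ℝ) + 3)) ^ (2 : ℝ) := by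
    filter_upwards [eventually_ge_atTop 2] with x hx k
    have hc₀ : (0 : ℝ) ≤ 3 / (2 * k + 3) := by positivity
    rw [Real.norm_of_nonneg (Real.rpow_nonneg hc₀ x)]
    exact Real.rpow_le_rpow_of_exponent_ge' hc₀ (three_div_two_mul_add_three_le_one k)
      zero_le_two hx
  unfold lambdaTail
  simpa using tendsto_tsum_of_dominated_convergence
    (summable_lambdaTail_terms one_lt_two) hterm hbound

lemma h_eq_lambdaTail_div {x : ℝ} (hx : 1 < x) :
    h x = lambdaTail x / (1 + 3 ^ (-x) * lambdaTail x) := by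
  have h3 : (0 : ℝ) < 3 ^ x := Real.rpow_pos_of_pos three_pos x
  have hpos : 0 < 3 ^ x + lambdaTail x := by linarith [lambdaTail_nonneg x]
  rw [h, one_sub_two_rpow_neg_mul_zetaR hx, dirichletLambdaR_eq_one_add hx,
    Real.rpow_neg zero_le_three]
  field_simp
  ring

theorem h_tendsto_one : Filter.Tendsto h Filter.atTop (nhds 1) := by
  have hdecay : Tendsto (fun x : ℝ => (3 : ℝ) ^ (-x)) atTop (𝓝 0) := by
    simpa [Real.rpow_neg zero_le_three, Real.inv_rpow zero_le_three] using
      tendsto_rpow_atTop_of_base_lt_one (3 : ℝ)⁻¹ (by norm_num) (by norm_num)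
  have hdenom : Tendsto (fun x : ℝ => 1 + 3 ^ (-x) * lambdaTail x) atTop (𝓝 1) := by
    simpa using tendsto_const_nhds.add (hdecay.mul tendsto_lambdaTail)
  have hquot := tendsto_lambdaTail.div hdenom one_ne_zero
  rw [div_one] at hquot
  refine hquot.congr' ?_
  filter_upwards [eventually_gt_atTop 1] with x hx
  exact (h_eq_lambdaTail_div hx).symm
end
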